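/- arXiv:2104.10861 — 9 statements merged into one kernel-verified Lean document; each statement's English description precedes it below -/
import Mathlib

section
/- Let X, Y, Z be real vector spaces equipped with asymmetric norms p₁, p₂, q respectively and let T : X × Y → Z be a bilinear operator. Then the following are equivalent: (i) for every (x,y) ∈ X × Y and every sequence (xₙ,yₙ) in X × Y with p₁(xₙ − x) → 0 and p₂(yₙ − y) → 0, one has q(T(xₙ,yₙ) − T(x,y)) → 0 (sequential continuity of T with respect to the quasi-metric topologies induced by p₁ × p₂ and q); (ii) for every ε > 0 there exists r > 0 such that q(T(x,y)) ≤ ε whenever p₁(x) ≤ r and p₂(y) ≤ r (continuity of T at (0,0)); (iii) there exists β ≥ 0 such that q(T(x,y)) ≤ β·p₁(x)·p₂(y) for all (x,y) ∈ X × Y. -/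
/-!
(iii) ⇒ (i): split `T (x', y') - T (x, y) = T (x' - x, y') + T (x, y' - y)` and bound
`p₂ y' ≤ p₂ (y' - y) + p₂ y`. (ii) ⇒ (iii): by homogeneity, rescaling `x` and `y` into the
`r`-ball gives `q (T (x, y)) ≤ (p₁ x + δ) (p₂ y + δ) / r²` for every `δ > 0`; the `δ` is needed
because `p₁ x = 0` does not force `x = 0` for an asymmetric norm. (i) ⇒ (ii): otherwise there
are `xₙ, yₙ` with `p₁ xₙ, p₂ yₙ ≤ 1/(n+1)` and `q (T (xₙ, yₙ)) > ε`, contradicting (i) at `(0, 0)`.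
-/

/-- An asymmetric norm on a real vector space. -/
structure IsAsymNorm {X : Type*} [AddCommGroup X] [Module ℝ X] (p : X → ℝ) : Prop where
  nonneg : ∀ x, 0 ≤ p x
  eq_zero : ∀ x, p x = 0 → p (-x) = 0 → x = 0
  smul_eq : ∀ (a : ℝ) (x : X), 0 ≤ a → p (a • x) = a * p x
  add_le : ∀ x y, p (x + y) ≤ p x + p y

/-- A bilinear operator `T : X × Y → Z`. -/
def IsBilinOp {X Y Z : Type*} [AddCommGroup X] [Module ℝ X] [AddCommGroup Y] [Module ℝ Y]
    [AddCommGroup Z] [Module ℝ Z] (T : X × Y → Z) : Prop :=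
  (∀ x x' y, T (x + x', y) = T (x, y) + T (x', y)) ∧
  (∀ (a : ℝ) (x : X) (y : Y), T (a • x, y) = a • T (x, y)) ∧
  (∀ x y y', T (x, y + y') = T (x, y) + T (x, y')) ∧
  (∀ (a : ℝ) (x : X) (y : Y), T (x, a • y) = a • T (x, y))

open Filter Topology

namespace IsAsymNorm

variable {X : Type*} [AddCommGroup X] [Module ℝ X] {p : X → ℝ}

theorem le_sub_add (hp : IsAsymNorm p) (x y : X) : p y ≤ p (y - x) + p x := by
  simpa using hp.add_le (y - x) x

theorem smul_div_le {r s : ℝ} {x : X} (hp : IsAsymNorm p) (hr : 0 ≤ r) (hs : 0 < s)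
    (hx : p x ≤ s) : p ((r / s) • x) ≤ r := by
  rw [hp.smul_eq _ _ (by positivity), div_mul_eq_mul_div, div_le_iff₀ hs]
  gcongr

end IsAsymNorm

theorem le_mul_mul_of_forall_pos_add {a c u v : ℝ}
    (h : ∀ δ > 0, a ≤ c * (u + δ) * (v + δ)) : a ≤ c * u * v := by
  have hlim : Tendsto (fun δ => c * (u + δ) * (v + δ)) (𝓝[>] 0) (𝓝 (c * u * v)) := by
    have hcont : Continuous fun δ : ℝ => c * (u + δ) * (v + δ) := by fun_prop
    simpa using (hcont.tendsto 0).mono_left nhdsWithin_le_nhds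
  exact ge_of_tendsto hlim (eventually_nhdsWithin_of_forall h)

theorem exists_pos_forall_le_of_seq_tendsto {α β : Type*} {p₁ : α → ℝ} {p₂ : β → ℝ}
    (f : α → β → ℝ) (hp₁ : ∀ x, 0 ≤ p₁ x) (hp₂ : ∀ y, 0 ≤ p₂ y)
    (h : ∀ (xs : ℕ → α) (ys : ℕ → β), Tendsto (fun n => p₁ (xs n)) atTop (𝓝 0) →
      Tendsto (fun n => p₂ (ys n)) atTop (𝓝 0) → Tendsto (fun n => f (xs n) (ys n)) atTop (𝓝 0))
    {ε : ℝ} (hε : 0 < ε) : ∃ r > 0, ∀ x y, p₁ x ≤ r → p₂ y ≤ r → f x y ≤ ε := by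
  by_contra! hc
  choose xs ys hxs hys hgt using fun n : ℕ => hc (1 / (n + 1)) Nat.one_div_pos_of_nat
  have hlim : Tendsto (fun n : ℕ => 1 / ((n : ℝ) + 1)) atTop (𝓝 0) :=
    tendsto_one_div_add_atTop_nhds_zero_nat
  have hf := h xs ys (squeeze_zero (fun n => hp₁ _) hxs hlim)
    (squeeze_zero (fun n => hp₂ _) hys hlim)
  obtain ⟨n, hn⟩ := (hf.eventually (eventually_lt_nhds hε)).exists
  exact (hgt n).not_gt hn

namespace IsBilinOp

variable {X Y Z : Type*} [AddCommGroup X] [Module ℝ X] [AddCommGroup Y] [Module ℝ Y]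
  [AddCommGroup Z] [Module ℝ Z] {p₁ : X → ℝ} {p₂ : Y → ℝ} {q : Z → ℝ} {T : X × Y → Z}

def toLinearMap₂ (hT : IsBilinOp T) : X →ₗ[ℝ] Y →ₗ[ℝ] Z :=
  LinearMap.mk₂ ℝ (fun x y => T (x, y)) hT.1 hT.2.1 hT.2.2.1 hT.2.2.2

theorem toLinearMap₂_apply (hT : IsBilinOp T) (x : X) (y : Y) : hT.toLinearMap₂ x y = T (x, y) :=
  rfl

theorem map_zero_zero (hT : IsBilinOp T) : T (0, 0) = 0 :=
  hT.toLinearMap₂.map_zero₂ 0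

theorem map_smul_smul (hT : IsBilinOp T) (a b : ℝ) (x : X) (y : Y) :
    T (a • x, b • y) = (a * b) • T (x, y) := by
  simp only [← toLinearMap₂_apply hT, map_smul, LinearMap.smul_apply, smul_smul, mul_comm]

theorem map_sub_map (hT : IsBilinOp T) (x x' : X) (y y' : Y) :
    T (x', y') - T (x, y) = T (x' - x, y') + T (x, y' - y) := by
  simp only [← toLinearMap₂_apply hT, map_sub, LinearMap.sub_apply]
  abel

theorem asymNorm_map_sub_map_le (hT : IsBilinOp T) (hp₁ : IsAsymNorm p₁) (hp₂ : IsAsymNorm p₂)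
    (hq : IsAsymNorm q) {β : ℝ} (hβ : 0 ≤ β) (hbound : ∀ x y, q (T (x, y)) ≤ β * p₁ x * p₂ y)
    (x x' : X) (y y' : Y) :
    q (T (x', y') - T (x, y)) ≤
      β * p₁ (x' - x) * (p₂ (y' - y) + p₂ y) + β * p₁ x * p₂ (y' - y) := by
  have hβx : 0 ≤ β * p₁ (x' - x) := mul_nonneg hβ (hp₁.nonneg _)
  calc q (T (x', y') - T (x, y))
      = q (T (x' - x, y') + T (x, y' - y)) := by rw [hT.map_sub_map]
    _ ≤ q (T (x' - x, y')) + q (T (x, y' - y)) := hq.add_le _ _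
    _ ≤ β * p₁ (x' - x) * p₂ y' + β * p₁ x * p₂ (y' - y) := add_le_add (hbound _ _) (hbound _ _)
    _ ≤ _ := by gcongr; exact hp₂.le_sub_add y y'

theorem tendsto_of_le_mul (hT : IsBilinOp T) (hp₁ : IsAsymNorm p₁) (hp₂ : IsAsymNorm p₂)
    (hq : IsAsymNorm q) {β : ℝ} (hβ : 0 ≤ β) (hbound : ∀ x y, q (T (x, y)) ≤ β * p₁ x * p₂ y)
    {x : X} {y : Y} {xs : ℕ → X} {ys : ℕ → Y} (hx : Tendsto (fun n => p₁ (xs n - x)) atTop (𝓝 0))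
    (hy : Tendsto (fun n => p₂ (ys n - y)) atTop (𝓝 0)) :
    Tendsto (fun n => q (T (xs n, ys n) - T (x, y))) atTop (𝓝 0) := by
  refine squeeze_zero (fun n => hq.nonneg _)
    (fun n => hT.asymNorm_map_sub_map_le hp₁ hp₂ hq hβ hbound x (xs n) y (ys n)) ?_
  simpa using ((tendsto_const_nhds.mul hx).mul (hy.add_const (p₂ y))).add
    ((tendsto_const_nhds (x := β * p₁ x)).mul hy)

theorem asymNorm_le_div_sq_mul_of_le (hT : IsBilinOp T) (hp₁ : IsAsymNorm p₁)
    (hp₂ : IsAsymNorm p₂) (hq : IsAsymNorm q) {r ε : ℝ} (hr : 0 < r)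
    (hbound : ∀ x y, p₁ x ≤ r → p₂ y ≤ r → q (T (x, y)) ≤ ε) {s t : ℝ} (hs : 0 < s) (ht : 0 < t)
    {x : X} {y : Y} (hx : p₁ x ≤ s) (hy : p₂ y ≤ t) : q (T (x, y)) ≤ ε / r ^ 2 * s * t := by
  have h := hbound _ _ (hp₁.smul_div_le hr.le hs hx) (hp₂.smul_div_le hr.le ht hy)
  rw [hT.map_smul_smul, hq.smul_eq _ _ (by positivity)] at h
  rw [div_mul_eq_mul_div, div_mul_eq_mul_div, le_div_iff₀ (by positivity)]
  field_simp at h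
  linarith

theorem asymNorm_le_div_sq_mul (hT : IsBilinOp T) (hp₁ : IsAsymNorm p₁) (hp₂ : IsAsymNorm p₂)
    (hq : IsAsymNorm q) {r ε : ℝ} (hr : 0 < r)
    (hbound : ∀ x y, p₁ x ≤ r → p₂ y ≤ r → q (T (x, y)) ≤ ε) (x : X) (y : Y) :
    q (T (x, y)) ≤ ε / r ^ 2 * p₁ x * p₂ y :=
  le_mul_mul_of_forall_pos_add fun δ hδ =>
    hT.asymNorm_le_div_sq_mul_of_le hp₁ hp₂ hq hr hbound (by linarith [hp₁.nonneg x])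
      (by linarith [hp₂.nonneg y]) (le_add_of_nonneg_right hδ.le) (le_add_of_nonneg_right hδ.le)

end IsBilinOp

theorem stmt_1 {X Y Z : Type*} [AddCommGroup X] [Module ℝ X] [AddCommGroup Y] [Module ℝ Y]
    [AddCommGroup Z] [Module ℝ Z]
    (p₁ : X → ℝ) (p₂ : Y → ℝ) (q : Z → ℝ)
    (hp₁ : IsAsymNorm p₁) (hp₂ : IsAsymNorm p₂) (hq : IsAsymNorm q)
    (T : X × Y → Z) (hT : IsBilinOp T) :
    List.TFAE
      [∀ (x : X) (y : Y) (xs : ℕ → X) (ys : ℕ → Y),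
          Filter.Tendsto (fun n => p₁ (xs n - x)) Filter.atTop (nhds 0) →
          Filter.Tendsto (fun n => p₂ (ys n - y)) Filter.atTop (nhds 0) →
          Filter.Tendsto (fun n => q (T (xs n, ys n) - T (x, y))) Filter.atTop (nhds 0),
        ∀ ε > (0 : ℝ), ∃ r > (0 : ℝ), ∀ x y, p₁ x ≤ r → p₂ y ≤ r → q (T (x, y)) ≤ ε,
        ∃ β ≥ (0 : ℝ), ∀ x y, q (T (x, y)) ≤ β * p₁ x * p₂ y] := by
  tfae_have 1 → 2 := by
    intro hcont ε hε
    refine exists_pos_forall_le_of_seq_tendsto (fun x y => q (T (x, y))) hp₁.nonneg hp₂.nonneg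
      (fun xs ys hxs hys => ?_) hε
    simpa [hT.map_zero_zero] using hcont 0 0 xs ys (by simpa using hxs) (by simpa using hys)
  tfae_have 2 → 3 := by
    intro hball
    obtain ⟨r, hr, hbound⟩ := hball 1 one_pos
    exact ⟨1 / r ^ 2, by positivity, hT.asymNorm_le_div_sq_mul hp₁ hp₂ hq hr hbound⟩
  tfae_have 3 → 1 := by
    rintro ⟨β, hβ, hbound⟩ x y xs ys hx hy
    exact hT.tendsto_of_le_mul hp₁ hp₂ hq hβ hbound hx hy
  tfae_finish
end

section
/- Let X be a real Banach space with norm ‖·‖, and let Y, Z be real vector spaces equipped with asymmetric norms p₂ and q respectively. Let T : X × Y → Z be a bilinear operator which is separately continuous, i.e.: for every y ∈ Y there exists λ ≥ 0 with q(T(x,y)) ≤ λ·‖x‖ for all x ∈ X, and for every x ∈ X there exists μ ≥ 0 with q(T(x,y)) ≤ μ·p₂(y) for all y ∈ Y. Then T is jointly continuous: there exists β ≥ 0 such that q(T(x,y)) ≤ β·‖x‖·p₂(y) for all (x,y) ∈ X × Y. -/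
theorem stmt_4 {X Y Z : Type*} [NormedAddCommGroup X] [NormedSpace ℝ X] [CompleteSpace X]
    [AddCommGroup Y] [Module ℝ Y] [AddCommGroup Z] [Module ℝ Z]
    (p₂ : Y → ℝ) (q : Z → ℝ) (hp₂ : IsAsymNorm p₂) (hq : IsAsymNorm q)
    (T : X × Y → Z) (hT : IsBilinOp T)
    (h1 : ∀ y : Y, ∃ lam ≥ (0 : ℝ), ∀ x : X, q (T (x, y)) ≤ lam * ‖x‖)
    (h2 : ∀ x : X, ∃ mu ≥ (0 : ℝ), ∀ y : Y, q (T (x, y)) ≤ mu * p₂ y) :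
    ∃ β ≥ (0 : ℝ), ∀ x y, q (T (x, y)) ≤ β * ‖x‖ * p₂ y := by
  obtain ⟨A1, A2, A3, A4⟩ := hT
  -- scalar homogeneity of `max (q v) (q (-v))`
  have qmax : ∀ (a : ℝ) (v : Z),
      max (q (a • v)) (q (a • (-v))) = |a| * max (q v) (q (-v)) := by
    intro a v
    rcases le_or_gt 0 a with ha | ha
    · rw [hq.smul_eq a v ha, hq.smul_eq a (-v) ha, abs_of_nonneg ha,
        mul_max_of_nonneg _ _ ha]
    · have ha' : (0 : ℝ) ≤ -a := by linarith
      have e1 : a • v = (-a) • (-v) := by simp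
      have e2 : a • (-v) = (-a) • v := by simp
      rw [e1, e2, hq.smul_eq _ _ ha', hq.smul_eq _ _ ha', abs_of_neg ha,
        mul_max_of_nonneg _ _ ha', max_comm]
  have Tneg : ∀ (x : X) (y : Y), T (-x, y) = -T (x, y) := by
    intro x y
    have := A2 (-1) x y
    simpa using this
  -- the family of seminorms
  set g : {y : Y // p₂ y ≤ 1} → Seminorm ℝ X := fun i =>
    Seminorm.of (fun x => max (q (T (x, i.1))) (q (T (-x, i.1))))
      (by
        intro x x'
        have e1 : T (x + x', i.1) = T (x, i.1) + T (x', i.1) := A1 x x' i.1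
        have e2 : T (-(x + x'), i.1) = T (-x, i.1) + T (-x', i.1) := by
          rw [show -(x + x') = -x + -x' by abel]; exact A1 _ _ _
        refine max_le ?_ ?_
        · calc q (T (x + x', i.1)) ≤ q (T (x, i.1)) + q (T (x', i.1)) := by
                rw [e1]; exact hq.add_le _ _
            _ ≤ _ := add_le_add (le_max_left _ _) (le_max_left _ _)
        · calc q (T (-(x + x'), i.1)) ≤ q (T (-x, i.1)) + q (T (-x', i.1)) := by
                rw [e2]; exact hq.add_le _ _
            _ ≤ _ := add_le_add (le_max_right _ _) (le_max_right _ _))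
      (by
        intro a x
        show q (T (a • x, i.1)) ⊔ q (T (-(a • x), i.1)) =
          ‖a‖ * (q (T (x, i.1)) ⊔ q (T (-x, i.1)))
        have e1 : T (a • x, i.1) = a • T (x, i.1) := A2 a x i.1
        have e2 : T (-(a • x), i.1) = a • (-T (x, i.1)) := by
          rw [show -(a • x) = a • (-x) by simp, A2 a (-x) i.1, Tneg]
        rw [e1, e2, qmax, Tneg, Real.norm_eq_abs])
    with hg
  have hgapp : ∀ (i : {y : Y // p₂ y ≤ 1}) (x : X),
      g i x = max (q (T (x, i.1))) (q (T (-x, i.1))) := fun i x => rfl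
  -- each seminorm is continuous
  have hcont : ∀ i, Continuous (g i) := by
    intro i
    obtain ⟨lam, hlam0, hlam⟩ := h1 i.1
    have hle : g i ≤ lam.toNNReal • normSeminorm ℝ X := by
      intro x
      show g i x ≤ (lam.toNNReal • normSeminorm ℝ X) x
      have : (lam.toNNReal • normSeminorm ℝ X) x = lam.toNNReal * ‖x‖ := rfl
      rw [hgapp, this, Real.coe_toNNReal _ hlam0]
      refine max_le (hlam x) ?_
      have := hlam (-x)
      simpa using this
    have hcn : Continuous ⇑(lam.toNNReal • normSeminorm ℝ X) := by
      have : ⇑(lam.toNNReal • normSeminorm ℝ X) = fun x : X => (lam.toNNReal : ℝ) * ‖x‖ := rfl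
      rw [this]
      exact continuous_const.mul continuous_norm
    exact Seminorm.continuous_of_le hcn hle
  -- pointwise boundedness
  have bdd : BddAbove (Set.range g) := by
    rw [Seminorm.bddAbove_range_iff]
    intro x
    obtain ⟨mu, hmu0, hmu⟩ := h2 x
    obtain ⟨mu', hmu'0, hmu'⟩ := h2 (-x)
    refine ⟨max mu mu', ?_⟩
    rintro r ⟨i, rfl⟩
    show g i x ≤ max mu mu'
    rw [hgapp]
    refine max_le ?_ ?_
    · calc q (T (x, i.1)) ≤ mu * p₂ i.1 := hmu i.1
        _ ≤ mu * 1 := mul_le_mul_of_nonneg_left i.2 hmu0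
        _ ≤ max mu mu' := by rw [mul_one]; exact le_max_left _ _
    · calc q (T (-x, i.1)) ≤ mu' * p₂ i.1 := hmu' i.1
        _ ≤ mu' * 1 := mul_le_mul_of_nonneg_left i.2 hmu'0
        _ ≤ max mu mu' := by rw [mul_one]; exact le_max_right _ _
  -- Banach-Steinhaus: the sup is a continuous seminorm
  have hScont : Continuous ⇑(⨆ i, g i : Seminorm ℝ X) := by
    rw [Seminorm.coe_iSup_eq bdd]
    exact Seminorm.continuous_iSup g hcont bdd
  obtain ⟨C, hC0, hC⟩ := Seminorm.bound_of_continuous_normedSpace (⨆ i, g i) hScont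
  -- uniform bound on the unit ball of p₂
  have hball : ∀ (x : X) (y : Y), p₂ y ≤ 1 → q (T (x, y)) ≤ C * ‖x‖ := by
    intro x y hy
    have h1' : g ⟨y, hy⟩ ≤ ⨆ i, g i := le_ciSup bdd ⟨y, hy⟩
    calc q (T (x, y)) ≤ g ⟨y, hy⟩ x := by rw [hgapp]; exact le_max_left _ _
      _ ≤ (⨆ i, g i) x := h1' x
      _ ≤ C * ‖x‖ := hC x
  refine ⟨C, le_of_lt hC0, fun x y => ?_⟩
  rcases eq_or_lt_of_le (hp₂.nonneg y) with h0 | hpos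
  · -- p₂ y = 0
    obtain ⟨mu, hmu0, hmu⟩ := h2 x
    have : q (T (x, y)) ≤ mu * p₂ y := hmu y
    rw [← h0] at this ⊢
    simpa using this
  · -- p₂ y > 0
    set t := p₂ y with ht
    have hyt : y = t • ((t⁻¹ : ℝ) • y) := by
      rw [smul_smul, mul_inv_cancel₀ (ne_of_gt hpos), one_smul]
    have hpy' : p₂ ((t⁻¹ : ℝ) • y) ≤ 1 := by
      rw [hp₂.smul_eq _ _ (le_of_lt (inv_pos.mpr hpos)), ← ht,
        inv_mul_cancel₀ (ne_of_gt hpos)]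
    have key : q (T (x, y)) = t * q (T (x, (t⁻¹ : ℝ) • y)) := by
      conv_lhs => rw [hyt, A4, hq.smul_eq _ _ (le_of_lt hpos)]
    rw [key]
    calc t * q (T (x, (t⁻¹ : ℝ) • y)) ≤ t * (C * ‖x‖) :=
          mul_le_mul_of_nonneg_left (hball x _ hpy') (le_of_lt hpos)
      _ = C * ‖x‖ * t := by ring
end

section
/- Let X, Y be real vector spaces, let ι be a type equipped with a filter l (the index set of a net), let b_i : X × Y → ℝ (i ∈ ι) be a family of bilinear forms and let b : X × Y → ℝ be a bilinear form. Then the following are equivalent: (i) for every (x,y) ∈ X × Y, u(b_i(x,y) − b(x,y)) = max(b_i(x,y) − b(x,y), 0) tends to 0 along l; (ii) for every (x,y) ∈ X × Y, b_i(x,y) tends to b(x,y) in ℝ (usual absolute-value topology) along l. -/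
theorem stmt_5 {X Y : Type*} [AddCommGroup X] [Module ℝ X] [AddCommGroup Y] [Module ℝ Y]
    {ι : Type*} (l : Filter ι)
    (b' : ι → X × Y → ℝ) (b : X × Y → ℝ)
    (hb' : ∀ i, IsBilinOp (b' i)) (hb : IsBilinOp b) :
    (∀ x y, Filter.Tendsto (fun i => max (b' i (x, y) - b (x, y)) 0) l (nhds 0)) ↔
      (∀ x y, Filter.Tendsto (fun i => b' i (x, y)) l (nhds (b (x, y)))) := by
  constructor
  · intro h x y
    have hneg : ∀ (T : X × Y → ℝ), IsBilinOp T → T (-x, y) = -T (x, y) := by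
      intro T hT
      have := hT.2.1 (-1) x y
      simpa using this
    have h1 := h x y
    have h2 := h (-x) y
    have h2' : Filter.Tendsto (fun i => max (-(b' i (x, y) - b (x, y))) 0) l (nhds 0) := by
      have : (fun i => max (b' i (-x, y) - b (-x, y)) 0)
          = fun i => max (-(b' i (x, y) - b (x, y))) 0 := by
        funext i
        rw [hneg _ (hb' i), hneg _ hb]
        ring_nf
      rwa [this] at h2
    rw [Metric.tendsto_nhds]
    intro ε hε
    rw [Metric.tendsto_nhds] at h1 h2'
    filter_upwards [h1 ε hε, h2' ε hε] with i hi1 hi2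
    simp only [Real.dist_eq, sub_zero] at hi1 hi2 ⊢
    have := le_max_left (b' i (x, y) - b (x, y)) 0
    have := le_max_left (-(b' i (x, y) - b (x, y))) 0
    have := le_max_right (b' i (x, y) - b (x, y)) 0
    rw [abs_sub_lt_iff]
    constructor
    · calc b' i (x, y) - b (x, y) ≤ max (b' i (x, y) - b (x, y)) 0 := le_max_left _ _
        _ ≤ |max (b' i (x, y) - b (x, y)) 0| := le_abs_self _
        _ < ε := hi1
    · calc b (x, y) - b' i (x, y) = -(b' i (x, y) - b (x, y)) := by ring
        _ ≤ max (-(b' i (x, y) - b (x, y))) 0 := le_max_left _ _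
        _ ≤ |max (-(b' i (x, y) - b (x, y))) 0| := le_abs_self _
        _ < ε := hi2
  · intro h x y
    have : Filter.Tendsto (fun i => b' i (x, y) - b (x, y)) l (nhds 0) := by
      simpa using (h x y).sub (tendsto_const_nhds (x := b (x, y)))
    have := this.max (tendsto_const_nhds (x := (0:ℝ)) (f := l))
    simpa using this
end

section
/- Let X, Y be real vector spaces equipped with asymmetric norms p₁ and p₂. Then the set B = {b : X × Y → ℝ | b is bilinear and b(x,y) ≤ p₁(x)·p₂(y) for all (x,y) ∈ X × Y} is a compact subset of the space of all functions from X × Y to ℝ endowed with the product topology (the topology of pointwise convergence). (B is exactly the closed unit ball {b : ‖b|_{p₁,p₂} ≤ 1} of the cone of continuous bilinear forms, and on B the pointwise-convergence topology coincides with the w²-topology; this is the Alaoglu–Bourbaki theorem for bilinear forms.) -/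
theorem stmt_6 {X Y : Type*} [AddCommGroup X] [Module ℝ X] [AddCommGroup Y] [Module ℝ Y]
    (p₁ : X → ℝ) (p₂ : Y → ℝ) (hp₁ : IsAsymNorm p₁) (hp₂ : IsAsymNorm p₂) :
    IsCompact {b : X × Y → ℝ | IsBilinOp b ∧ ∀ x y, b (x, y) ≤ p₁ x * p₂ y} := by
  have hK : IsCompact (Set.pi Set.univ
      (fun z : X × Y => Set.Icc (-(p₁ (-z.1) * p₂ z.2)) (p₁ z.1 * p₂ z.2))) :=
    isCompact_univ_pi fun z => isCompact_Icc
  apply IsCompact.of_isClosed_subset hK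
  · simp only [IsBilinOp, Set.setOf_and, Set.setOf_forall]
    refine IsClosed.inter (IsClosed.inter ?_ (IsClosed.inter ?_ (IsClosed.inter ?_ ?_))) ?_
    · exact isClosed_iInter fun x => isClosed_iInter fun x' => isClosed_iInter fun y =>
        isClosed_eq (continuous_apply _) ((continuous_apply (x, y)).add (continuous_apply (x', y)))
    · exact isClosed_iInter fun a => isClosed_iInter fun x => isClosed_iInter fun y =>
        isClosed_eq (continuous_apply _) ((continuous_apply _).const_smul a)
    · exact isClosed_iInter fun x => isClosed_iInter fun y => isClosed_iInter fun y' =>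
        isClosed_eq (continuous_apply _) ((continuous_apply (x, y)).add (continuous_apply (x, y')))
    · exact isClosed_iInter fun a => isClosed_iInter fun x => isClosed_iInter fun y =>
        isClosed_eq (continuous_apply _) ((continuous_apply _).const_smul a)
    · exact isClosed_iInter fun x => isClosed_iInter fun y =>
        isClosed_le (continuous_apply _) continuous_const
  · rintro b ⟨hb, hle⟩ z -
    constructor
    · have hneg : b (-z.1, z.2) = -b (z.1, z.2) := by
        have := hb.2.1 (-1) z.1 z.2
        simpa [neg_one_smul] using this
      have := hle (-z.1) z.2
      rw [hneg] at this
      linarith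
    · exact hle z.1 z.2
end

section
/- Let X, Y, Z be real vector spaces equipped with asymmetric norms p₁, p₂, q, and let A : X × Y → Z be a bilinear operator such that the set {q(A(x,y)) : p₁(x) ≤ 1, p₂(y) ≤ 1} is bounded above, with supremum ‖A|. Then sup{ ψ(A(x,y)) : ψ : Z → ℝ linear with ψ(z) ≤ q(z) for all z ∈ Z, and x ∈ X, y ∈ Y with p₁(x) ≤ 1, p₂(y) ≤ 1 } = ‖A|. (Equivalently, the adjoint A♭, defined by (A♭ψ)(x,y) = ψ(A(x,y)) on the dual cone Z♭ = {ψ linear continuous}, satisfies ‖A♭|_{q♭,‖·|} = ‖A|_{p₁,p₂;q}, since q♭(ψ) ≤ 1 is equivalent to ψ(z) ≤ q(z) for all z.) -/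
/-! By Hahn–Banach, a sublinear `q` is the pointwise maximum of the linear functionals below it,
the maximum being attained. So every value `ψ (A (x, y))` is bounded by `q (A (x, y))`, which is
itself such a value; two sets dominating each other this way have the same `sSup`. -/

theorem exists_linearMap_le_sublinear_eq {E : Type*} [AddCommGroup E] [Module ℝ E] (N : E → ℝ)
    (N_hom : ∀ c : ℝ, 0 < c → ∀ x, N (c • x) = c * N x) (N_add : ∀ x y, N (x + y) ≤ N x + N y)
    (x₀ : E) : ∃ ψ : E →ₗ[ℝ] ℝ, (∀ x, ψ x ≤ N x) ∧ ψ x₀ = N x₀ := by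
  have N_zero : N 0 = 0 := by
    have h := N_hom 2 two_pos 0
    rw [smul_zero] at h
    linarith
  have h_smul_zero : ∀ c : ℝ, c • x₀ = 0 → c • N x₀ = 0 := by
    intro c hc
    rcases smul_eq_zero.mp hc with rfl | rfl
    · exact zero_smul ℝ _
    · rw [N_zero, smul_zero]
  set f := LinearPMap.mkSpanSingleton' (σ := RingHom.id ℝ) x₀ (N x₀) h_smul_zero
  -- For `c < 0`, sublinearity gives `N 0 ≤ N (c • x₀) + (-c) * N x₀`.
  have hf : ∀ x : f.domain, f x ≤ N x := by
    rintro ⟨x, hx⟩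
    obtain ⟨c, rfl⟩ := Submodule.mem_span_singleton.mp hx
    rw [LinearPMap.mkSpanSingleton'_apply, RingHom.id_apply, smul_eq_mul]
    rcases lt_trichotomy c 0 with hc | rfl | hc
    · have h_add := N_add (c • x₀) ((-c) • x₀)
      rw [← add_smul, add_neg_cancel, zero_smul, N_zero, N_hom (-c) (neg_pos.mpr hc)] at h_add
      linarith
    · simp [N_zero]
    · rw [N_hom c hc]
  obtain ⟨ψ, hψf, hψN⟩ := exists_extension_of_le_sublinear f N N_hom N_add hf
  exact ⟨ψ, hψN, (hψf ⟨x₀, Submodule.mem_span_singleton_self x₀⟩).trans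
    (LinearPMap.mkSpanSingleton'_apply_self _ _ _ _)⟩

theorem IsAsymNorm.exists_linearMap_le_eq {X : Type*} [AddCommGroup X] [Module ℝ X]
    {p : X → ℝ} (hp : IsAsymNorm p) (x₀ : X) :
    ∃ ψ : X →ₗ[ℝ] ℝ, (∀ x, ψ x ≤ p x) ∧ ψ x₀ = p x₀ :=
  exists_linearMap_le_sublinear_eq p (fun c hc x => hp.smul_eq c x hc.le) hp.add_le x₀

theorem stmt_8_general {X Y Z : Type*} [AddCommGroup X] [Module ℝ X] [AddCommGroup Y] [Module ℝ Y]
    [AddCommGroup Z] [Module ℝ Z]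
    (p₁ : X → ℝ) (p₂ : Y → ℝ) (q : Z → ℝ)
    (hq : IsAsymNorm q)
    (A : X × Y → Z) :
    sSup {r : ℝ | ∃ (ψ : Z →ₗ[ℝ] ℝ) (x : X) (y : Y),
        (∀ z, ψ z ≤ q z) ∧ p₁ x ≤ 1 ∧ p₂ y ≤ 1 ∧ r = ψ (A (x, y))} =
      sSup {r : ℝ | ∃ x y, p₁ x ≤ 1 ∧ p₂ y ≤ 1 ∧ r = q (A (x, y))} := by
  apply csSup_eq_csSup_of_forall_exists_le
  · rintro _ ⟨ψ, x, y, hψ, hx, hy, rfl⟩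
    exact ⟨_, ⟨x, y, hx, hy, rfl⟩, hψ _⟩
  · rintro _ ⟨x, y, hx, hy, rfl⟩
    obtain ⟨ψ, hψ, hψ_eq⟩ := hq.exists_linearMap_le_eq (A (x, y))
    exact ⟨_, ⟨ψ, x, y, hψ, hx, hy, rfl⟩, hψ_eq.ge⟩

theorem stmt_8 {X Y Z : Type*} [AddCommGroup X] [Module ℝ X] [AddCommGroup Y] [Module ℝ Y]
    [AddCommGroup Z] [Module ℝ Z]
    (p₁ : X → ℝ) (p₂ : Y → ℝ) (q : Z → ℝ)
    (hp₁ : IsAsymNorm p₁) (hp₂ : IsAsymNorm p₂) (hq : IsAsymNorm q)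
    (A : X × Y → Z) (hA : IsBilinOp A)
    (hbd : BddAbove {r : ℝ | ∃ x y, p₁ x ≤ 1 ∧ p₂ y ≤ 1 ∧ r = q (A (x, y))}) :
    sSup {r : ℝ | ∃ (ψ : Z →ₗ[ℝ] ℝ) (x : X) (y : Y),
        (∀ z, ψ z ≤ q z) ∧ p₁ x ≤ 1 ∧ p₂ y ≤ 1 ∧ r = ψ (A (x, y))} =
      sSup {r : ℝ | ∃ x y, p₁ x ≤ 1 ∧ p₂ y ≤ 1 ∧ r = q (A (x, y))} :=
  stmt_8_general p₁ p₂ q hq A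
end

section
/- (Schauder-type theorem for bilinear operators.) Let X, Y, Z be real vector spaces equipped with asymmetric norms p₁, p₂, q, set qˢ(z) = max(q(z), q(−z)), and let T : X × Y → Z be a bilinear operator which is qˢ-precompact, i.e. for every ε > 0 there exist finitely many pairs (x₁,y₁),…,(xₙ,yₙ) with p₁(x_k) ≤ 1 and p₂(y_k) ≤ 1 such that for every (x,y) with p₁(x) ≤ 1 and p₂(y) ≤ 1 there is k with qˢ(T(x,y) − T(x_k,y_k)) ≤ ε. Then the adjoint T♭ is precompact on the unit ball of the dual cone: for every ε > 0 there exist finitely many linear functionals ψ₁,…,ψ_m : Z → ℝ with ψ_i(z) ≤ q(z) for all z ∈ Z, such that for every linear functional ψ : Z → ℝ with ψ(z) ≤ q(z) for all z ∈ Z, there is i ∈ {1,…,m} with ψ(T(x,y)) − ψ_i(T(x,y)) ≤ ε for all (x,y) with p₁(x) ≤ 1 and p₂(y) ≤ 1. -/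
theorem stmt_10 {X Y Z : Type*} [AddCommGroup X] [Module ℝ X] [AddCommGroup Y] [Module ℝ Y]
    [AddCommGroup Z] [Module ℝ Z]
    (p₁ : X → ℝ) (p₂ : Y → ℝ) (q : Z → ℝ)
    (hp₁ : IsAsymNorm p₁) (hp₂ : IsAsymNorm p₂) (hq : IsAsymNorm q)
    (T : X × Y → Z) (hT : IsBilinOp T)
    (hpc : ∀ ε > (0 : ℝ), ∃ (n : ℕ) (xs : Fin n → X) (ys : Fin n → Y),
      (∀ k, p₁ (xs k) ≤ 1 ∧ p₂ (ys k) ≤ 1) ∧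
      ∀ x y, p₁ x ≤ 1 → p₂ y ≤ 1 → ∃ k,
        max (q (T (x, y) - T (xs k, ys k))) (q (-(T (x, y) - T (xs k, ys k)))) ≤ ε) :
    ∀ ε > (0 : ℝ), ∃ (m : ℕ) (ψ : Fin m → Z →ₗ[ℝ] ℝ),
      (∀ i, ∀ z, ψ i z ≤ q z) ∧
      ∀ φ : Z →ₗ[ℝ] ℝ, (∀ z, φ z ≤ q z) → ∃ i,
        ∀ x y, p₁ x ≤ 1 → p₂ y ≤ 1 → φ (T (x, y)) - ψ i (T (x, y)) ≤ ε := by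
  intro ε hε
  have hε3 : (0:ℝ) < ε / 3 := by linarith
  obtain ⟨n, xs, ys, hbnd, hnet⟩ := hpc (ε / 3) hε3
  set z : Fin n → Z := fun k => T (xs k, ys k) with hz
  set S : Set (Fin n → ℝ) :=
    {v | ∃ φ : Z →ₗ[ℝ] ℝ, (∀ w, φ w ≤ q w) ∧ v = fun k => φ (z k)} with hS
  have hSsub : S ⊆ Set.pi Set.univ (fun k => Set.Icc (-(q (-(z k)))) (q (z k))) := by
    rintro v ⟨φ, hφ, rfl⟩ k _
    refine ⟨?_, hφ _⟩
    have h1 := hφ (-(z k))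
    rw [map_neg] at h1
    linarith
  have hcomp : IsCompact (Set.pi Set.univ fun k => Set.Icc (-(q (-(z k)))) (q (z k))) :=
    isCompact_univ_pi fun _ => isCompact_Icc
  have hTB : TotallyBounded S := hcomp.totallyBounded.subset hSsub
  obtain ⟨t, hts, htfin, hcover⟩ :=
    totallyBounded_iff_subset.mp hTB _ (Metric.dist_mem_uniformity hε3)
  have hchoice : ∀ c : t, ∃ φ : Z →ₗ[ℝ] ℝ, (∀ w, φ w ≤ q w) ∧
      (c : Fin n → ℝ) = fun k => φ (z k) := fun c => hts c.2
  choose Ψ hΨ hΨvec using hchoice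
  haveI : Fintype t := htfin.fintype
  refine ⟨Fintype.card t, fun i => Ψ ((Fintype.equivFin t).symm i), fun i => hΨ _, ?_⟩
  intro φ hφ
  have hvS : (fun k => φ (z k)) ∈ S := ⟨φ, hφ, rfl⟩
  have hcv := hcover hvS
  simp only [Set.mem_iUnion, Set.mem_setOf_eq] at hcv
  obtain ⟨c, hct, hcd⟩ := hcv
  refine ⟨(Fintype.equivFin t) ⟨c, hct⟩, ?_⟩
  intro x y hx hy
  obtain ⟨k, hk⟩ := hnet x y hx hy
  simp only [Equiv.symm_apply_apply]
  set ψ := Ψ ⟨c, hct⟩ with hψ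
  have h1 : φ (T (x, y) - z k) ≤ ε / 3 :=
    (hφ _).trans ((le_max_left _ _).trans hk)
  have h2 : ψ (z k - T (x, y)) ≤ ε / 3 := by
    have h := hΨ ⟨c, hct⟩ (-(T (x, y) - z k))
    have hk2 : q (-(T (x, y) - T (xs k, ys k))) ≤ ε / 3 := (le_max_right _ _).trans hk
    rw [neg_sub] at h
    rw [neg_sub] at hk2
    exact h.trans hk2
  have h3 : φ (z k) - ψ (z k) < ε / 3 := by
    have hd := dist_le_pi_dist (fun k => φ (z k)) c k
    have hck : c k = ψ (z k) := congrFun (hΨvec ⟨c, hct⟩) k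
    have habs : |φ (z k) - c k| < ε / 3 := by
      rw [← Real.dist_eq]
      exact lt_of_le_of_lt hd hcd
    have := (abs_lt.mp habs).2
    rw [hck] at this
    linarith
  have e1 : φ (T (x, y) - z k) = φ (T (x, y)) - φ (z k) := map_sub φ _ _
  have e2 : ψ (z k - T (x, y)) = ψ (z k) - ψ (T (x, y)) := map_sub ψ _ _
  rw [e1] at h1
  rw [e2] at h2
  linarith
end

section
/- Let X, Y, Z be real vector spaces equipped with asymmetric norms p₁, p₂, q, and set qˢ(z) = max(q(z), q(−z)). Let Tₙ : X × Y → Z (n ∈ ℕ) be a sequence of bilinear operators such that each Tₙ is qˢ-precompact, i.e. for every ε > 0 there exist finitely many pairs (x₁,y₁),…,(x_m,y_m) with p₁(x_k) ≤ 1, p₂(y_k) ≤ 1 such that for every (x,y) with p₁(x) ≤ 1, p₂(y) ≤ 1 there is k with qˢ(Tₙ(x,y) − Tₙ(x_k,y_k)) ≤ ε. Let T : X × Y → Z be a map such that qˢ(Tₙ(x,y) − T(x,y)) → 0 for every (x,y) ∈ X × Y, and the convergence is uniform on the unit balls: for every ε > 0 there is N such that qˢ(Tₙ(x,y) − T(x,y))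 ≤ ε for all n ≥ N and all (x,y) with p₁(x) ≤ 1 and p₂(y) ≤ 1. Then T is a bilinear operator and T is qˢ-precompact. -/
section Aux
variable {Z : Type*} [AddCommGroup Z] [Module ℝ Z]

def symn (q : Z → ℝ) (z : Z) : ℝ := max (q z) (q (-z))

variable {q : Z → ℝ} (hq : IsAsymNorm q)
include hq

lemma symn_nonneg (z : Z) : 0 ≤ symn q z := le_max_of_le_left (hq.nonneg z)

omit hq in
lemma symn_neg (z : Z) : symn q (-z) = symn q z := by simp [symn, max_comm]

lemma symn_add_le (u v : Z) : symn q (u + v) ≤ symn q u + symn q v := by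
  unfold symn
  rw [max_le_iff]
  refine ⟨(hq.add_le u v).trans (add_le_add (le_max_left _ _) (le_max_left _ _)), ?_⟩
  rw [neg_add]
  exact (hq.add_le (-u) (-v)).trans (add_le_add (le_max_right _ _) (le_max_right _ _))

lemma symn_smul (a : ℝ) (z : Z) : symn q (a • z) = |a| * symn q z := by
  unfold symn
  rcases le_or_gt 0 a with ha | ha
  · rw [abs_of_nonneg ha, ← smul_neg, hq.smul_eq a z ha, hq.smul_eq a (-z) ha,
      mul_max_of_nonneg _ _ ha]
  · have ha' : 0 ≤ -a := by linarith
    have e1 : q (a • z) = -a * q (-z) := by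
      rw [show a • z = (-a) • (-z) by simp, hq.smul_eq _ _ ha']
    have e2 : q (-(a • z)) = -a * q z := by
      rw [show -(a • z) = (-a) • z by simp, hq.smul_eq _ _ ha']
    rw [abs_of_neg ha, e1, e2, mul_max_of_nonneg _ _ ha']
    exact max_comm _ _

lemma symn_lim_unique {f : ℕ → Z} {c c' : Z}
    (h1 : Filter.Tendsto (fun n => symn q (f n - c)) Filter.atTop (nhds 0))
    (h2 : Filter.Tendsto (fun n => symn q (f n - c')) Filter.atTop (nhds 0)) : c = c' := by
  have hbound : ∀ n, symn q (c - c') ≤ symn q (f n - c) + symn q (f n - c') := by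
    intro n
    have h : c - c' = -(f n - c) + (f n - c') := by abel
    calc symn q (c - c') = symn q (-(f n - c) + (f n - c')) := by rw [← h]
    _ ≤ symn q (-(f n - c)) + symn q (f n - c') := symn_add_le hq _ _
    _ = symn q (f n - c) + symn q (f n - c') := by rw [symn_neg]
  have key : symn q (c - c') ≤ 0 := by
    have := le_of_tendsto_of_tendsto' (tendsto_const_nhds
      (x := symn q (c - c')) (f := Filter.atTop (α := ℕ)))
      (by simpa using h1.add h2) hbound
    simpa using this
  have h0 : symn q (c - c') = 0 := le_antisymm key (symn_nonneg hq _)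
  have hq1 : q (c - c') = 0 := le_antisymm ((le_max_left _ _).trans_eq h0) (hq.nonneg _)
  have hq2 : q (-(c - c')) = 0 := le_antisymm ((le_max_right _ _).trans_eq h0) (hq.nonneg _)
  exact sub_eq_zero.mp (hq.eq_zero _ hq1 hq2)

end Aux

theorem stmt_11 {X Y Z : Type*} [AddCommGroup X] [Module ℝ X] [AddCommGroup Y] [Module ℝ Y]
    [AddCommGroup Z] [Module ℝ Z]
    (p₁ : X → ℝ) (p₂ : Y → ℝ) (q : Z → ℝ)
    (hp₁ : IsAsymNorm p₁) (hp₂ : IsAsymNorm p₂) (hq : IsAsymNorm q)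
    (T' : ℕ → X × Y → Z) (T : X × Y → Z)
    (hbil : ∀ n, IsBilinOp (T' n))
    (hpc : ∀ n, ∀ ε > (0 : ℝ), ∃ (m : ℕ) (xs : Fin m → X) (ys : Fin m → Y),
      (∀ k, p₁ (xs k) ≤ 1 ∧ p₂ (ys k) ≤ 1) ∧
      ∀ x y, p₁ x ≤ 1 → p₂ y ≤ 1 → ∃ k,
        max (q (T' n (x, y) - T' n (xs k, ys k))) (q (-(T' n (x, y) - T' n (xs k, ys k)))) ≤ ε)
    (hptw : ∀ x y, Filter.Tendsto
      (fun n => max (q (T' n (x, y) - T (x, y))) (q (-(T' n (x, y) - T (x, y)))))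
      Filter.atTop (nhds 0))
    (hunif : ∀ ε > (0 : ℝ), ∃ N : ℕ, ∀ n ≥ N, ∀ x y, p₁ x ≤ 1 → p₂ y ≤ 1 →
      max (q (T' n (x, y) - T (x, y))) (q (-(T' n (x, y) - T (x, y)))) ≤ ε) :
    IsBilinOp T ∧
      ∀ ε > (0 : ℝ), ∃ (m : ℕ) (xs : Fin m → X) (ys : Fin m → Y),
        (∀ k, p₁ (xs k) ≤ 1 ∧ p₂ (ys k) ≤ 1) ∧
        ∀ x y, p₁ x ≤ 1 → p₂ y ≤ 1 → ∃ k,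
          max (q (T (x, y) - T (xs k, ys k))) (q (-(T (x, y) - T (xs k, ys k)))) ≤ ε := by
  have hlim : ∀ x y, Filter.Tendsto (fun n => symn q (T' n (x, y) - T (x, y)))
      Filter.atTop (nhds 0) := hptw
  constructor
  · refine ⟨?_, ?_, ?_, ?_⟩
    · intro x x' y
      refine symn_lim_unique hq (f := fun n => T' n (x + x', y)) (hlim _ _) ?_
      have heq : ∀ n, T' n (x + x', y) - (T (x, y) + T (x', y))
          = (T' n (x, y) - T (x, y)) + (T' n (x', y) - T (x', y)) := by
        intro n; rw [(hbil n).1]; abel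
      refine squeeze_zero (fun n => symn_nonneg hq _)
        (g := fun n => symn q (T' n (x, y) - T (x, y)) + symn q (T' n (x', y) - T (x', y)))
        (fun n => by rw [heq n]; exact symn_add_le hq _ _) ?_
      simpa using (hlim x y).add (hlim x' y)
    · intro a x y
      refine symn_lim_unique hq (f := fun n => T' n (a • x, y)) (hlim _ _) ?_
      have heq : ∀ n, T' n (a • x, y) - a • T (x, y) = a • (T' n (x, y) - T (x, y)) := by
        intro n; rw [(hbil n).2.1, smul_sub]
      simp only [heq, symn_smul hq]
      simpa using (hlim x y).const_mul |a|
    · intro x y y'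
      refine symn_lim_unique hq (f := fun n => T' n (x, y + y')) (hlim _ _) ?_
      have heq : ∀ n, T' n (x, y + y') - (T (x, y) + T (x, y'))
          = (T' n (x, y) - T (x, y)) + (T' n (x, y') - T (x, y')) := by
        intro n; rw [(hbil n).2.2.1]; abel
      refine squeeze_zero (fun n => symn_nonneg hq _)
        (g := fun n => symn q (T' n (x, y) - T (x, y)) + symn q (T' n (x, y') - T (x, y')))
        (fun n => by rw [heq n]; exact symn_add_le hq _ _) ?_
      simpa using (hlim x y).add (hlim x y')
    · intro a x y
      refine symn_lim_unique hq (f := fun n => T' n (x, a • y)) (hlim _ _) ?_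
      have heq : ∀ n, T' n (x, a • y) - a • T (x, y) = a • (T' n (x, y) - T (x, y)) := by
        intro n; rw [(hbil n).2.2.2, smul_sub]
      simp only [heq, symn_smul hq]
      simpa using (hlim x y).const_mul |a|
  · intro ε hε
    obtain ⟨N, hN⟩ := hunif (ε / 3) (by linarith)
    obtain ⟨m, xs, ys, hballs, hnet⟩ := hpc N (ε / 3) (by linarith)
    refine ⟨m, xs, ys, hballs, ?_⟩
    intro x y hx hy
    obtain ⟨k, hk⟩ := hnet x y hx hy
    refine ⟨k, ?_⟩
    have h1 : symn q (T (x, y) - T' N (x, y)) ≤ ε / 3 := by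
      rw [show T (x, y) - T' N (x, y) = -(T' N (x, y) - T (x, y)) by abel, symn_neg]
      exact hN N le_rfl x y hx hy
    have h2 : symn q (T' N (x, y) - T' N (xs k, ys k)) ≤ ε / 3 := hk
    have h3 : symn q (T' N (xs k, ys k) - T (xs k, ys k)) ≤ ε / 3 :=
      hN N le_rfl _ _ (hballs k).1 (hballs k).2
    show symn q (T (x, y) - T (xs k, ys k)) ≤ ε
    have hdecomp : T (x, y) - T (xs k, ys k)
        = (T (x, y) - T' N (x, y)) + (T' N (x, y) - T' N (xs k, ys k))
          + (T' N (xs k, ys k) - T (xs k, ys k)) := by abel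
    calc symn q (T (x, y) - T (xs k, ys k))
        ≤ symn q ((T (x, y) - T' N (x, y)) + (T' N (x, y) - T' N (xs k, ys k)))
          + symn q (T' N (xs k, ys k) - T (xs k, ys k)) := by
          rw [hdecomp]; exact symn_add_le hq _ _
      _ ≤ symn q (T (x, y) - T' N (x, y)) + symn q (T' N (x, y) - T' N (xs k, ys k))
          + symn q (T' N (xs k, ys k) - T (xs k, ys k)) := by
          gcongr; exact symn_add_le hq _ _
      _ ≤ ε := by linarith
end

section
/- Let X, Y, X', Y', Z be real vector spaces equipped with asymmetric norms p₁, p₂, p₁', p₂', q respectively, and set qˢ(z) = max(q(z), q(−z)). Let S₁ : X' → X and S₂ : Y' → Y be linear operators with p₁(S₁x') ≤ β₁·p₁'(x') and p₂(S₂y') ≤ β₂·p₂'(y') for all x' ∈ X', y' ∈ Y', for some β₁, β₂ > 0. Let T : X × Y → Z be a bilinear operator which is qˢ-precompact, i.e. for every ε > 0 there exist finitely many pairs (x₁,y₁),…,(xₙ,yₙ) with p₁(x_k) ≤ 1, p₂(y_k) ≤ 1 such that every (x,y) with p₁(x) ≤ 1, p₂(y) ≤ 1 satisfies qˢ(T(x,y)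 − T(x_k,y_k)) ≤ ε for some k. Then the bilinear operator T∘(S₁,S₂) : X' × Y' → Z, (x',y') ↦ T(S₁x', S₂y'), is qˢ-precompact: for every ε > 0 there exist finitely many pairs (x'₁,y'₁),…,(x'_m,y'_m) with p₁'(x'_k) ≤ 1, p₂'(y'_k) ≤ 1 such that every (x',y') with p₁'(x') ≤ 1, p₂'(y') ≤ 1 satisfies qˢ(T(S₁x',S₂y') − T(S₁x'_k,S₂y'_k)) ≤ ε for some k. -/
lemma asym_zero {X : Type*} [AddCommGroup X] [Module ℝ X] {p : X → ℝ}
    (hp : IsAsymNorm p) : p 0 = 0 := by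
  have := hp.smul_eq 0 0 le_rfl
  simpa using this

theorem stmt_14 {X Y X' Y' Z : Type*} [AddCommGroup X] [Module ℝ X] [AddCommGroup Y] [Module ℝ Y]
    [AddCommGroup X'] [Module ℝ X'] [AddCommGroup Y'] [Module ℝ Y']
    [AddCommGroup Z] [Module ℝ Z]
    (p₁ : X → ℝ) (p₂ : Y → ℝ) (p₁' : X' → ℝ) (p₂' : Y' → ℝ) (q : Z → ℝ)
    (hp₁ : IsAsymNorm p₁) (hp₂ : IsAsymNorm p₂) (hp₁' : IsAsymNorm p₁')
    (hp₂' : IsAsymNorm p₂') (hq : IsAsymNorm q)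
    (S₁ : X' →ₗ[ℝ] X) (S₂ : Y' →ₗ[ℝ] Y) (β₁ β₂ : ℝ) (hβ₁ : 0 < β₁) (hβ₂ : 0 < β₂)
    (hS₁ : ∀ x', p₁ (S₁ x') ≤ β₁ * p₁' x') (hS₂ : ∀ y', p₂ (S₂ y') ≤ β₂ * p₂' y')
    (T : X × Y → Z) (hT : IsBilinOp T)
    (hpc : ∀ ε > (0 : ℝ), ∃ (n : ℕ) (xs : Fin n → X) (ys : Fin n → Y),
      (∀ k, p₁ (xs k) ≤ 1 ∧ p₂ (ys k) ≤ 1) ∧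
      ∀ x y, p₁ x ≤ 1 → p₂ y ≤ 1 → ∃ k,
        max (q (T (x, y) - T (xs k, ys k))) (q (-(T (x, y) - T (xs k, ys k)))) ≤ ε) :
    ∀ ε > (0 : ℝ), ∃ (m : ℕ) (xs' : Fin m → X') (ys' : Fin m → Y'),
      (∀ k, p₁' (xs' k) ≤ 1 ∧ p₂' (ys' k) ≤ 1) ∧
      ∀ x' y', p₁' x' ≤ 1 → p₂' y' ≤ 1 → ∃ k,
        max (q (T (S₁ x', S₂ y') - T (S₁ (xs' k), S₂ (ys' k))))
          (q (-(T (S₁ x', S₂ y') - T (S₁ (xs' k), S₂ (ys' k))))) ≤ ε := by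
  classical
  intro ε hε
  set qs : Z → ℝ := fun z => max (q z) (q (-z)) with hqs
  have qs_add : ∀ a b, qs (a + b) ≤ qs a + qs b := by
    intro a b
    refine max_le ?_ ?_
    · exact (hq.add_le a b).trans (add_le_add (le_max_left _ _) (le_max_left _ _))
    · rw [neg_add]
      exact (hq.add_le (-a) (-b)).trans (add_le_add (le_max_right _ _) (le_max_right _ _))
  have β₁₂ : (0:ℝ) < β₁ * β₂ := mul_pos hβ₁ hβ₂
  have hε' : 0 < ε / (2 * (β₁ * β₂)) := by positivity
  obtain ⟨n, xs, ys, hbdd, hnet⟩ := hpc _ hε'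
  -- key: for unit x', y', the scaled image is covered
  have key : ∀ x' y', p₁' x' ≤ 1 → p₂' y' ≤ 1 → ∃ k,
      qs (T (S₁ x', S₂ y') - (β₁ * β₂) • T (xs k, ys k)) ≤ ε / 2 := by
    intro x' y' hx hy
    have hx1 : p₁ (β₁⁻¹ • S₁ x') ≤ 1 := by
      rw [hp₁.smul_eq _ _ (by positivity)]
      calc β₁⁻¹ * p₁ (S₁ x') ≤ β₁⁻¹ * (β₁ * p₁' x') := by
            exact mul_le_mul_of_nonneg_left (hS₁ x') (by positivity)
        _ = p₁' x' := by field_simp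
        _ ≤ 1 := hx
    have hy1 : p₂ (β₂⁻¹ • S₂ y') ≤ 1 := by
      rw [hp₂.smul_eq _ _ (by positivity)]
      calc β₂⁻¹ * p₂ (S₂ y') ≤ β₂⁻¹ * (β₂ * p₂' y') := by
            exact mul_le_mul_of_nonneg_left (hS₂ y') (by positivity)
        _ = p₂' y' := by field_simp
        _ ≤ 1 := hy
    obtain ⟨k, hk⟩ := hnet _ _ hx1 hy1
    refine ⟨k, ?_⟩
    have hTe : (β₁ * β₂) • T (β₁⁻¹ • S₁ x', β₂⁻¹ • S₂ y') = T (S₁ x', S₂ y') := by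
      rw [hT.2.1, hT.2.2.2, smul_smul, smul_smul]
      have h1 : β₁ * β₂ * β₁⁻¹ * β₂⁻¹ = 1 := by field_simp
      rw [h1, one_smul]
    have hsc : qs ((β₁ * β₂) • (T (β₁⁻¹ • S₁ x', β₂⁻¹ • S₂ y') - T (xs k, ys k)))
        ≤ (β₁ * β₂) * (ε / (2 * (β₁ * β₂))) := by
      refine max_le ?_ ?_
      · rw [hq.smul_eq _ _ β₁₂.le]
        exact mul_le_mul_of_nonneg_left (le_trans (le_max_left _ _) hk) β₁₂.le
      · rw [← smul_neg, hq.smul_eq _ _ β₁₂.le]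
        exact mul_le_mul_of_nonneg_left (le_trans (le_max_right _ _) hk) β₁₂.le
    rw [smul_sub, hTe] at hsc
    calc qs (T (S₁ x', S₂ y') - (β₁ * β₂) • T (xs k, ys k))
        ≤ (β₁ * β₂) * (ε / (2 * (β₁ * β₂))) := hsc
      _ = ε / 2 := by field_simp
  -- choose representatives in the image
  set P : Fin n → Prop := fun k => ∃ x' y', p₁' x' ≤ 1 ∧ p₂' y' ≤ 1 ∧
    qs (T (S₁ x', S₂ y') - (β₁ * β₂) • T (xs k, ys k)) ≤ ε / 2 with hP
  set xs' : Fin n → X' := fun k => if h : P k then h.choose else 0 with hxs'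
  set ys' : Fin n → Y' := fun k => if h : P k then h.choose_spec.choose else 0 with hys'
  refine ⟨n, xs', ys', ?_, ?_⟩
  · intro k
    by_cases h : P k
    · obtain ⟨h1, h2, _⟩ := h.choose_spec.choose_spec
      simp only [hxs', hys', dif_pos h]
      exact ⟨h1, h2⟩
    · simp only [hxs', hys', dif_neg h, asym_zero hp₁', asym_zero hp₂']
      norm_num
  · intro x' y' hx hy
    obtain ⟨k, hk⟩ := key x' y' hx hy
    have hPk : P k := ⟨x', y', hx, hy, hk⟩
    refine ⟨k, ?_⟩
    have hspec := hPk.choose_spec.choose_spec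
    have hk' : qs (T (S₁ (xs' k), S₂ (ys' k)) - (β₁ * β₂) • T (xs k, ys k)) ≤ ε / 2 := by
      simp only [hxs', hys', dif_pos hPk]
      exact hspec.2.2
    have tri : qs (T (S₁ x', S₂ y') - T (S₁ (xs' k), S₂ (ys' k))) ≤ ε / 2 + ε / 2 := by
      have := qs_add (T (S₁ x', S₂ y') - (β₁ * β₂) • T (xs k, ys k))
        ((β₁ * β₂) • T (xs k, ys k) - T (S₁ (xs' k), S₂ (ys' k)))
      rw [sub_add_sub_cancel] at this
      refine this.trans (add_le_add hk ?_)
      have he : (β₁ * β₂) • T (xs k, ys k) - T (S₁ (xs' k), S₂ (ys' k))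
          = -(T (S₁ (xs' k), S₂ (ys' k)) - (β₁ * β₂) • T (xs k, ys k)) := by abel
      simp only [hqs, he, neg_neg] at hk' ⊢
      rw [max_comm]
      exact hk'
    rw [show ε / 2 + ε / 2 = ε by ring] at tri
    exact tri
end

section
/- Let X, Y, X', Y', Z be real vector spaces equipped with asymmetric norms p₁, p₂, p₁', p₂', q respectively. Let S₁ : X' → X and S₂ : Y' → Y be linear operators with p₁(S₁x') ≤ β₁·p₁'(x') and p₂(S₂y') ≤ β₂·p₂'(y') for all x' ∈ X', y' ∈ Y', for some β₁, β₂ > 0. Let T : X × Y → Z be a bilinear operator which is q-precompact, i.e. for every ε > 0 there exist finitely many pairs (x₁,y₁),…,(xₙ,yₙ) with p₁(x_k) ≤ 1, p₂(y_k) ≤ 1 such that every (x,y) with p₁(x) ≤ 1, p₂(y) ≤ 1 satisfies q(T(x,y) − T(x_k,y_k)) ≤ ε for some k. Then the bilinear operator (x',y') ↦ T(S₁x', S₂y') maps the unit balls of (X',p₁') and (Y',p₂') into an outside q-precompact set: for every ε > 0 there exist finitely many points z₁,…,z_m ∈ Z such that for every (x',y') with p₁'(x') ≤ 1 and p₂'(y')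 ≤ 1 there is k with q(T(S₁x',S₂y') − z_k) ≤ ε. -/
theorem stmt_15 {X Y X' Y' Z : Type*} [AddCommGroup X] [Module ℝ X] [AddCommGroup Y] [Module ℝ Y]
    [AddCommGroup X'] [Module ℝ X'] [AddCommGroup Y'] [Module ℝ Y']
    [AddCommGroup Z] [Module ℝ Z]
    (p₁ : X → ℝ) (p₂ : Y → ℝ) (p₁' : X' → ℝ) (p₂' : Y' → ℝ) (q : Z → ℝ)
    (hp₁ : IsAsymNorm p₁) (hp₂ : IsAsymNorm p₂) (hp₁' : IsAsymNorm p₁')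
    (hp₂' : IsAsymNorm p₂') (hq : IsAsymNorm q)
    (S₁ : X' →ₗ[ℝ] X) (S₂ : Y' →ₗ[ℝ] Y) (β₁ β₂ : ℝ) (hβ₁ : 0 < β₁) (hβ₂ : 0 < β₂)
    (hS₁ : ∀ x', p₁ (S₁ x') ≤ β₁ * p₁' x') (hS₂ : ∀ y', p₂ (S₂ y') ≤ β₂ * p₂' y')
    (T : X × Y → Z) (hT : IsBilinOp T)
    (hpc : ∀ ε > (0 : ℝ), ∃ (n : ℕ) (xs : Fin n → X) (ys : Fin n → Y),
      (∀ k, p₁ (xs k) ≤ 1 ∧ p₂ (ys k) ≤ 1) ∧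
      ∀ x y, p₁ x ≤ 1 → p₂ y ≤ 1 → ∃ k, q (T (x, y) - T (xs k, ys k)) ≤ ε) :
    ∀ ε > (0 : ℝ), ∃ (m : ℕ) (zs : Fin m → Z),
      ∀ x' y', p₁' x' ≤ 1 → p₂' y' ≤ 1 → ∃ k, q (T (S₁ x', S₂ y') - zs k) ≤ ε := by
  intro ε hε
  have hβ : (0 : ℝ) < β₁ * β₂ := mul_pos hβ₁ hβ₂
  obtain ⟨n, xs, ys, -, hcov⟩ := hpc (ε / (β₁ * β₂)) (div_pos hε hβ)
  refine ⟨n, fun k => (β₁ * β₂) • T (xs k, ys k), fun x' y' hx' hy' => ?_⟩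
  set x : X := β₁⁻¹ • S₁ x'
  set y : Y := β₂⁻¹ • S₂ y'
  have hx : p₁ x ≤ 1 := by
    have := hp₁.smul_eq β₁⁻¹ (S₁ x') (le_of_lt (inv_pos.2 hβ₁))
    rw [show p₁ x = β₁⁻¹ * p₁ (S₁ x') from this]
    calc β₁⁻¹ * p₁ (S₁ x') ≤ β₁⁻¹ * (β₁ * p₁' x') := by
          exact mul_le_mul_of_nonneg_left (hS₁ x') (le_of_lt (inv_pos.2 hβ₁))
      _ = p₁' x' := by field_simp
      _ ≤ 1 := hx'
  have hy : p₂ y ≤ 1 := by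
    have := hp₂.smul_eq β₂⁻¹ (S₂ y') (le_of_lt (inv_pos.2 hβ₂))
    rw [show p₂ y = β₂⁻¹ * p₂ (S₂ y') from this]
    calc β₂⁻¹ * p₂ (S₂ y') ≤ β₂⁻¹ * (β₂ * p₂' y') := by
          exact mul_le_mul_of_nonneg_left (hS₂ y') (le_of_lt (inv_pos.2 hβ₂))
      _ = p₂' y' := by field_simp
      _ ≤ 1 := hy'
  obtain ⟨k, hk⟩ := hcov x y hx hy
  refine ⟨k, ?_⟩
  obtain ⟨h1, h2, h3, h4⟩ := hT
  have hTxy : T (S₁ x', S₂ y') = (β₁ * β₂) • T (x, y) := by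
    rw [h2, h4, smul_smul, smul_smul]
    have : β₁ * β₂ * β₁⁻¹ * β₂⁻¹ = 1 := by field_simp
    rw [this, one_smul]
  have key : T (S₁ x', S₂ y') - (β₁ * β₂) • T (xs k, ys k)
      = (β₁ * β₂) • (T (x, y) - T (xs k, ys k)) := by
    rw [hTxy, smul_sub]
  rw [key, hq.smul_eq _ _ hβ.le]
  calc (β₁ * β₂) * q (T (x, y) - T (xs k, ys k)) ≤ (β₁ * β₂) * (ε / (β₁ * β₂)) :=
        mul_le_mul_of_nonneg_left hk hβ.le
    _ = ε := by field_simp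
end
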